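/- arXiv:2103.16512 — 9 statements merged into one kernel-verified Lean document; each statement's English description precedes it below -/
import Mathlib

section
/- If A and B are k×n matrices over the tropical semiring (min-plus) such that the tropical matrix product A ⊙ Bᵀ is symmetric, then any two rows of the k×(2n) block matrix (A|B) are tropically orthogonal; that is, for all i,j, the minimum of (A|B)_{i,l} + (A|B)_{j,σ(l)} over l ∈ [2n] is attained at least twice (or is +∞), where σ swaps the l-th and (n+l)-th coordinates. -/
/-- The minimum of `f` is attained at least twice, or `f` is identically `∞`. -/
def AAT {ι : Type*} (f : ι → WithTop ℝ) : Prop :=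
  (∀ i, f i = ⊤) ∨ ∃ i j, i ≠ j ∧ f i = f j ∧ ∀ l, f i ≤ f l

/-- If the tropical (min-plus) product `A ⊙ Bᵀ` is symmetric, then any two rows of the
block matrix `(A|B)` are tropically orthogonal with respect to the pairing swapping the
two blocks of columns. -/
theorem tropical_symmetric_product_rows_orthogonal {k n : ℕ}
    (A B : Matrix (Fin k) (Fin n) (WithTop ℝ))
    (hsymm : ∀ i j : Fin k,
      (Finset.univ.inf fun l : Fin n => A i l + B j l) =
        Finset.univ.inf fun l : Fin n => A j l + B i l) :
    ∀ i j : Fin k,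
      AAT (fun l : Fin n ⊕ Fin n =>
        Sum.elim (A i) (B i) l + Sum.elim (A j) (B j) (Sum.swap l)) := by
  intro i j
  set m : WithTop ℝ := Finset.univ.inf fun l : Fin n => A i l + B j l with hm
  have hsym : (Finset.univ.inf fun l : Fin n => A j l + B i l) = m := (hsymm i j).symm
  by_cases htop : m = ⊤
  · left
    intro l
    cases l with
    | inl l =>
        have h1 : m ≤ A i l + B j l := Finset.inf_le (Finset.mem_univ l)
        simpa [htop, top_le_iff] using h1
    | inr l =>
        have h1 : m ≤ A j l + B i l := hsym ▸ Finset.inf_le (Finset.mem_univ l)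
        have : A j l + B i l = ⊤ := by simpa [htop, top_le_iff] using h1
        simpa [add_comm] using this
  · right
    have hne : (Finset.univ : Finset (Fin n)).Nonempty := by
      rcases (Finset.univ : Finset (Fin n)).eq_empty_or_nonempty with he | h
      · exact absurd (by simp [hm, he]) htop
      · exact h
    obtain ⟨a, _, ha⟩ := Finset.exists_mem_eq_inf Finset.univ hne
      (fun l : Fin n => A i l + B j l)
    obtain ⟨b, _, hb⟩ := Finset.exists_mem_eq_inf Finset.univ hne
      (fun l : Fin n => A j l + B i l)
    refine ⟨Sum.inl a, Sum.inr b, by simp, ?_, ?_⟩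
    · simp only [Sum.swap, Sum.elim_inl, Sum.elim_inr]
      rw [← ha, ← hm, ← hsym, hb, add_comm]
    · intro l
      cases l with
      | inl l =>
          simp only [Sum.swap, Sum.elim_inl, Sum.elim_inr]
          calc A i a + B j a = m := by rw [hm, ha]
            _ ≤ A i l + B j l := Finset.inf_le (Finset.mem_univ l)
      | inr l =>
          simp only [Sum.swap, Sum.elim_inl, Sum.elim_inr]
          calc A i a + B j a = m := by rw [hm, ha]
            _ = Finset.univ.inf fun l : Fin n => A j l + B i l := hsym.symm
            _ ≤ A j l + B i l := Finset.inf_le (Finset.mem_univ l)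
            _ = B i l + A j l := add_comm _ _
end

section
/- Let x, y ∈ K^{2n} be vectors over a field K with non-Archimedean valuation val, with coordinates indexed by 1,…,n,1̄,…,n̄, such that ω(x,y) = Σ_{i=1}^n (x_i y_{ī} − x_{ī} y_i) = 0. Then the tropicalizations val(x), val(y) ∈ T^{2n} are tropically orthogonal: the minimum of val(x)_i + val(y)_{ī} over i ∈ [2n] is attained at least twice or equals ∞. -/
open Finset

lemma WithTop.eq_zero_or_eq_top_of_add_self {a : WithTop ℝ} (h : a + a = a) : a = 0 ∨ a = ⊤ := by
  induction a with
  | top => exact Or.inr rfl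
  | coe r =>
    left
    have hr : r + r = r := by exact_mod_cast h
    exact_mod_cast (show r = 0 by linarith)

lemma map_one_eq_zero_or_forall_eq_top {M : Type*} [MulOneClass M] {v : M → WithTop ℝ}
    (hmul : ∀ x y, v (x * y) = v x + v y) : v 1 = 0 ∨ ∀ x, v x = ⊤ := by
  refine (WithTop.eq_zero_or_eq_top_of_add_self (a := v 1) ?_).imp_right fun h1 x => ?_
  · rw [← hmul, one_mul]
  · rw [← mul_one x, hmul, h1, WithTop.add_top]

namespace AddValuation

variable {R : Type*} [Ring R] (v : AddValuation R (WithTop ℝ))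

lemma lt_map_of_lt_of_sum_eq_zero {ι : Type*} [Fintype ι] [DecidableEq ι] {t : ι → R}
    (hsum : ∑ i, t i = 0) (i₀ : ι) {g : WithTop ℝ} (hg : g ≠ ⊤)
    (hlt : ∀ j ≠ i₀, g < v (t j)) : g < v (t i₀) := by
  have ht : t i₀ = -∑ j ∈ univ.erase i₀, t j :=
    eq_neg_of_add_eq_zero_left (by rwa [add_sum_erase _ _ (mem_univ i₀)])
  rw [ht, map_neg]
  exact v.map_lt_sum hg fun j hj => hlt j (ne_of_mem_erase hj)

theorem aat_comp_of_sum_eq_zero {ι : Type*} [Fintype ι] {t : ι → R} (hsum : ∑ i, t i = 0) :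
    AAT (v ∘ t) := by
  classical
  by_cases htop : ∀ i, v (t i) = ⊤
  · exact Or.inl htop
  obtain ⟨i, hi⟩ := not_forall.mp htop
  have : Nonempty ι := ⟨i⟩
  obtain ⟨i₀, hmin⟩ := Finite.exists_min (v ∘ t)
  by_contra hnot
  have hlt : ∀ j ≠ i₀, v (t i₀) < v (t j) := fun j hj =>
    (hmin j).lt_of_ne fun h => hnot <| Or.inr ⟨i₀, j, hj.symm, h, hmin⟩
  exact (v.lt_map_of_lt_of_sum_eq_zero hsum i₀ ((hmin i).trans_lt (lt_top_iff_ne_top.2 hi)).ne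
    hlt).false

end AddValuation

section Symplectic

variable {K : Type*} [CommRing K] {ι : Type*} (x y : ι ⊕ ι → K)

def symplecticTerm : ι ⊕ ι → K :=
  Sum.elim (fun i => x (.inl i) * y (.inr i)) (fun i => -(x (.inr i) * y (.inl i)))

lemma sum_symplecticTerm [Fintype ι] :
    ∑ l, symplecticTerm x y l = ∑ i, (x (.inl i) * y (.inr i) - x (.inr i) * y (.inl i)) := by
  simp [symplecticTerm, Fintype.sum_sum_type, sub_eq_add_neg, sum_add_distrib]

lemma AddValuation.map_symplecticTerm {Γ₀ : Type*} [LinearOrderedAddCommMonoidWithTop Γ₀]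
    (v : AddValuation K Γ₀) (l : ι ⊕ ι) :
    v (symplecticTerm x y l) = v (x l) + v (y l.swap) := by
  cases l <;> simp [symplecticTerm, v.map_mul, v.map_neg]

end Symplectic

/-- If `ω(x, y) = 0` for the standard symplectic form, then the tropicalizations of `x` and
`y` are tropically orthogonal. -/
theorem symplectic_orthogonal_tropicalizes {K : Type*} [Field K]
    (v : K → WithTop ℝ)
    (hmul : ∀ x y : K, v (x * y) = v x + v y)
    (hadd : ∀ x y : K, min (v x) (v y) ≤ v (x + y))
    (hzero : v 0 = ⊤)
    {n : ℕ} (x y : Fin n ⊕ Fin n → K)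
    (hω : ∑ i : Fin n, (x (Sum.inl i) * y (Sum.inr i) - x (Sum.inr i) * y (Sum.inl i)) = 0) :
    AAT (fun l : Fin n ⊕ Fin n => v (x l) + v (y (Sum.swap l))) := by
  rcases map_one_eq_zero_or_forall_eq_top hmul with h1 | htop
  · let w : AddValuation K (WithTop ℝ) := .of v hzero h1 hadd hmul
    have hw : (fun l => v (x l) + v (y l.swap)) = w ∘ symplecticTerm x y :=
      funext fun l => (w.map_symplecticTerm x y l).symm
    rw [hw]
    exact w.aat_comp_of_sum_eq_zero ((sum_symplecticTerm x y).trans hω)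
  · exact Or.inl fun l => by simp [htop]
end

section
/- Let μ be a valuated matroid of rank k on [n] and μ* its dual. Identify [2n] with [n] ⊔ [n̄] where ī = n+i. Then for every n-subset J = B₁ ⊔ B₂ of [2n] (B₁ ⊆ [n], B₂ in the barred copy), one has (μ⊕μ*)_{[2n]∖J} = (μ⊕μ*)_{J̄}, where J̄ is obtained by swapping barred and unbarred elements of J. Consequently, by Rincón's criterion, the conormal bundle L_{μ⊕μ*} is tropically isotropic. -/
/-- The tropical linear space of a (valuated matroid) vector `ν` of rank `r` on ground set `m`. -/
def TLS {m : Type*} [Fintype m] [DecidableEq m] (r : ℕ) (ν : Finset m → WithTop ℝ) :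
    Set (m → WithTop ℝ) :=
  {x | ∀ T : Finset m, T.card = r + 1 →
    AAT (fun i : {i : m // i ∈ T} => ν (T.erase (i : m)) + x (i : m))}

def part1 {n : ℕ} (J : Finset (Fin n ⊕ Fin n)) : Finset (Fin n) :=
  Finset.univ.filter fun a => Sum.inl a ∈ J

def part2 {n : ℕ} (J : Finset (Fin n ⊕ Fin n)) : Finset (Fin n) :=
  Finset.univ.filter fun a => Sum.inr a ∈ J

/-- The direct sum `μ ⊕ μ*` of a valuated matroid with its dual. -/
def conormal {n : ℕ} (μ : Finset (Fin n) → WithTop ℝ) (J : Finset (Fin n ⊕ Fin n)) :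
    WithTop ℝ :=
  μ (part1 J) + μ ((part2 J)ᶜ)

open Finset

lemma AAT.exists_ne_le {ι : Type*} {f : ι → WithTop ℝ} (h : AAT f) {a : ι} (ha : f a ≠ ⊤) :
    ∃ b ≠ a, f b ≤ f a := by
  rcases h with htop | ⟨i, j, hij, hfij, hmin⟩
  · exact absurd (htop a) ha
  · by_cases hia : i = a
    · subst hia
      exact ⟨j, hij.symm, hfij.ge⟩
    · exact ⟨i, hia, hmin a⟩

lemma exists_forall_ne_lt_of_not_AAT {ι : Type*} [Finite ι] {f : ι → WithTop ℝ} (h : ¬ AAT f) :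
    ∃ e, f e ≠ ⊤ ∧ ∀ l ≠ e, f e < f l := by
  simp only [AAT, not_or, not_forall, not_exists, not_and, not_le] at h
  obtain ⟨⟨l₀, hl₀⟩, hpair⟩ := h
  have : Nonempty ι := ⟨l₀⟩
  obtain ⟨e, he⟩ := Finite.exists_min f
  refine ⟨e, ne_top_of_le_ne_top hl₀ (he l₀), fun l hl => (he l).lt_of_ne fun heq => ?_⟩
  obtain ⟨l', hl'⟩ := hpair e l hl.symm heq
  exact (he l').not_gt hl'

lemma card_insert_erase_of_mem {α : Type*} [DecidableEq α] {s : Finset α} {i j : α}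
    (hi : i ∈ s) (hj : j ∉ s.erase i) : (insert j (s.erase i)).card = s.card := by
  rw [card_insert_of_notMem hj, card_erase_add_one hi]

/-- Weights in `ℕ ×ₗ ℝ`: the first coordinate counts infinite values, so that a sum of weights
can still decrease when some of the summands are `⊤`. -/
def lexWeight : WithTop ℝ → ℕ ×ₗ ℝ
  | ⊤ => toLex (1, 0)
  | (a : ℝ) => toLex (0, a)

lemma lexWeight_add_lt_add {a b c d : WithTop ℝ} (ha : a ≠ ⊤) (hb : b ≠ ⊤) (hc : c ≠ ⊤)
    (h : a + b < c + d) : lexWeight a + lexWeight b < lexWeight c + lexWeight d := by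
  lift a to ℝ using ha
  lift b to ℝ using hb
  lift c to ℝ using hc
  induction d using WithTop.recTopCoe with
  | top => simp [lexWeight, ← toLex_add, Prod.Lex.toLex_lt_toLex]
  | coe d =>
    norm_cast at h
    simp [lexWeight, ← toLex_add, Prod.Lex.toLex_lt_toLex, h]

lemma lexWeight_sum_insert_erase_lt {α : Type*} [DecidableEq α] {f : α → WithTop ℝ}
    {B : Finset α} {i j : α} (hi : i ∈ B) (hj : j ∉ B.erase i) {a c : WithTop ℝ} (ha : a ≠ ⊤)
    (hfj : f j ≠ ⊤) (hc : c ≠ ⊤) (h : a + f j < c + f i) :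
    lexWeight a + ∑ l ∈ insert j (B.erase i), lexWeight (f l)
      < lexWeight c + ∑ l ∈ B, lexWeight (f l) := by
  rw [sum_insert hj, ← add_sum_erase B _ hi, ← add_assoc, ← add_assoc]
  exact add_lt_add_left (lexWeight_add_lt_add ha hfj hc h) _

section Isotropy

variable {m : Type*} [Fintype m] [DecidableEq m] {σ : m → m} {r : ℕ}
  {ν : Finset m → WithTop ℝ} {x y : m → WithTop ℝ}

lemma exists_exchange_of_mem_TLS (hx : x ∈ TLS r ν) {B : Finset m} (hB : B.card = r) {e : m}
    (he : e ∉ B) (hfin : ν B + x e ≠ ⊤) :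
    ∃ i ∈ B, ν (insert e (B.erase i)) + x i ≤ ν B + x e := by
  have hval : ν ((insert e B).erase e) = ν B := by rw [erase_insert he]
  have hcircuit := hx (insert e B) (by rw [card_insert_of_notMem he, hB])
  obtain ⟨⟨i, hiT⟩, hne, hle⟩ := hcircuit.exists_ne_le (a := ⟨e, mem_insert_self e B⟩)
    (by simpa only [hval] using hfin)
  have hie : i ≠ e := fun h => hne (Subtype.ext h)
  refine ⟨i, mem_of_mem_insert_of_ne hiT hie, ?_⟩
  simpa only [erase_insert_of_ne hie.symm, hval] using hle

/-- `B ↦ σ(Bᶜ)` preserves `ν`; transporting the exchange property of `y` along it exchanges an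
element *out of* `B`. -/
lemma exists_dual_exchange_of_mem_TLS (hσ : Function.Involutive σ)
    (hcard : Fintype.card m = r + r) (hdual : ∀ J, ν Jᶜ = ν (J.image σ)) (hy : y ∈ TLS r ν)
    {B : Finset m} (hB : B.card = r) {e : m} (he : e ∈ B) (hfin : ν B + y (σ e) ≠ ⊤) :
    ∃ i ∉ B, ν (insert i (B.erase e)) + y (σ i) ≤ ν B + y (σ e) := by
  have hν : ∀ A, ν (Aᶜ.image σ) = ν A := fun A => by rw [← hdual, compl_compl]
  have hB' : (Bᶜ.image σ).card = r := by
    rw [card_image_of_injective _ hσ.injective, card_compl, hB]; omega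
  have heB' : σ e ∉ Bᶜ.image σ := by simpa [hσ.injective.eq_iff] using he
  obtain ⟨i', hi', hle⟩ := exists_exchange_of_mem_TLS hy hB' heB' (by rwa [hν])
  obtain ⟨i, hiB, rfl⟩ := mem_image.1 hi'
  have hiB : i ∉ B := mem_compl.1 hiB
  have hset : insert (σ e) ((Bᶜ.image σ).erase (σ i)) = (insert i (B.erase e))ᶜ.image σ := by
    rw [← image_erase hσ.injective, ← image_insert]
    congr 1
    ext a
    by_cases hae : a = e <;> by_cases hai : a = i <;> simp_all
  exact ⟨i, hiB, by rwa [hset, hν, hν] at hle⟩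

lemma exists_exchange_lt_of_forall_ne_lt (hσ : Function.Involutive σ)
    (hcard : Fintype.card m = r + r) (hdual : ∀ J, ν Jᶜ = ν (J.image σ))
    (hx : x ∈ TLS r ν) (hy : y ∈ TLS r ν) {e : m} (hefin : x e + y (σ e) ≠ ⊤)
    (hemin : ∀ l ≠ e, x e + y (σ e) < x l + y (σ l))
    {B : Finset m} (hB : B.card = r) (hνB : ν B ≠ ⊤) (heB : e ∉ B) :
    ∃ i ∈ B, ∃ j ∉ B.erase i, j ≠ e ∧ ν (insert j (B.erase i)) ≠ ⊤ ∧ y (σ j) ≠ ⊤ ∧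
      ν (insert j (B.erase i)) + y (σ j) < ν B + y (σ i) := by
  obtain ⟨hxe, hye⟩ := WithTop.add_ne_top.1 hefin
  obtain ⟨i, hiB, hle₁⟩ :=
    exists_exchange_of_mem_TLS hx hB heB (WithTop.add_ne_top.2 ⟨hνB, hxe⟩)
  set B₁ := insert e (B.erase i)
  have hie : i ≠ e := fun h => heB (h ▸ hiB)
  have heB₁ : e ∉ B.erase i := fun h => heB (mem_of_mem_erase h)
  obtain ⟨hνB₁, hxi⟩ :=
    WithTop.add_ne_top.1 (ne_top_of_le_ne_top (WithTop.add_ne_top.2 ⟨hνB, hxe⟩) hle₁)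
  obtain ⟨j, hjB₁, hle₂⟩ := exists_dual_exchange_of_mem_TLS hσ hcard hdual hy
    (card_insert_erase_of_mem hiB heB₁ ▸ hB) (mem_insert_self e _)
    (WithTop.add_ne_top.2 ⟨hνB₁, hye⟩)
  rw [erase_insert heB₁] at hle₂
  obtain ⟨hνB₂, hyj⟩ :=
    WithTop.add_ne_top.1 (ne_top_of_le_ne_top (WithTop.add_ne_top.2 ⟨hνB₁, hye⟩) hle₂)
  refine ⟨i, hiB, j, fun h => hjB₁ (mem_insert_of_mem h),
    by rintro rfl; exact hjB₁ (mem_insert_self _ _), hνB₂, hyj, ?_⟩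
  refine (WithTop.add_lt_add_iff_right hxi).1 ?_
  calc ν (insert j (B.erase i)) + y (σ j) + x i ≤ ν B₁ + y (σ e) + x i := by gcongr
    _ = (ν B₁ + x i) + y (σ e) := add_right_comm _ _ _
    _ ≤ (ν B + x e) + y (σ e) := by gcongr
    _ = ν B + (x e + y (σ e)) := add_assoc _ _ _
    _ < ν B + (x i + y (σ i)) := WithTop.add_lt_add_left hνB (hemin i hie)
    _ = ν B + y (σ i) + x i := by rw [add_comm (x i), add_assoc]

lemma exists_card_eq_ne_top_notMem (hσ : Function.Involutive σ)
    (hcard : Fintype.card m = r + r) (hdual : ∀ J, ν Jᶜ = ν (J.image σ)) (hy : y ∈ TLS r ν)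
    (hfin : ∃ B : Finset m, B.card = r ∧ ν B ≠ ⊤) {e : m} (hye : y (σ e) ≠ ⊤) :
    ∃ B : Finset m, B.card = r ∧ ν B ≠ ⊤ ∧ e ∉ B := by
  obtain ⟨B, hB, hνB⟩ := hfin
  by_cases heB : e ∈ B
  · obtain ⟨i, hiB, hle⟩ := exists_dual_exchange_of_mem_TLS hσ hcard hdual hy hB heB
      (WithTop.add_ne_top.2 ⟨hνB, hye⟩)
    have hiB' : i ∉ B.erase e := fun h => hiB (mem_of_mem_erase h)
    refine ⟨insert i (B.erase e), card_insert_erase_of_mem heB hiB' ▸ hB,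
      (WithTop.add_ne_top.1 (ne_top_of_le_ne_top (WithTop.add_ne_top.2 ⟨hνB, hye⟩) hle)).1, ?_⟩
    simp only [mem_insert, mem_erase, ne_eq, not_true_eq_false, false_and, or_false]
    exact fun h => hiB (h ▸ heB)
  · exact ⟨B, hB, hνB, heB⟩

/-- Rincón's isotropy criterion, in the direction "self-dual up to `σ` implies isotropic". -/
theorem AAT_add_comp_of_mem_TLS (hσ : Function.Involutive σ)
    (hcard : Fintype.card m = r + r) (hdual : ∀ J, ν Jᶜ = ν (J.image σ))
    (hfin : ∃ B : Finset m, B.card = r ∧ ν B ≠ ⊤) (hx : x ∈ TLS r ν) (hy : y ∈ TLS r ν) :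
    AAT (fun l => x l + y (σ l)) := by
  by_contra hnot
  obtain ⟨e, hefin, hemin⟩ := exists_forall_ne_lt_of_not_AAT hnot
  let Φ : Finset m → ℕ ×ₗ ℝ := fun B => lexWeight (ν B) + ∑ l ∈ B, lexWeight (y (σ l))
  obtain ⟨B₀, hB₀⟩ := exists_card_eq_ne_top_notMem hσ hcard hdual hy hfin
    (WithTop.add_ne_top.1 hefin).2
  obtain ⟨B, hB, hmin⟩ := exists_min_image
    (univ.filter fun B : Finset m => B.card = r ∧ ν B ≠ ⊤ ∧ e ∉ B) Φ ⟨B₀, by simpa using hB₀⟩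
  obtain ⟨hBc, hνB, heB⟩ := (mem_filter.1 hB).2
  obtain ⟨i, hi, j, hj, hje, hν₂, hyj, hlt⟩ :=
    exists_exchange_lt_of_forall_ne_lt hσ hcard hdual hx hy hefin hemin hBc hνB heB
  have hB₂ :
      insert j (B.erase i) ∈ univ.filter fun B : Finset m => B.card = r ∧ ν B ≠ ⊤ ∧ e ∉ B := by
    simp only [mem_filter, mem_univ, true_and, card_insert_erase_of_mem hi hj, hBc,
      mem_insert, mem_erase, not_or, not_and]
    exact ⟨hν₂, Ne.symm hje, fun _ => heB⟩
  exact (hmin _ hB₂).not_gt (lexWeight_sum_insert_erase_lt hi hj hν₂ hyj hνB hlt)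

end Isotropy

lemma conormal_compl_eq_image_swap {n : ℕ} (μ : Finset (Fin n) → WithTop ℝ)
    (J : Finset (Fin n ⊕ Fin n)) : conormal μ Jᶜ = conormal μ (J.image Sum.swap) := by
  rw [conormal, conormal, add_comm]
  congr 2 <;> ext a <;> simp [part1, part2]

lemma exists_card_eq_conormal_ne_top {n : ℕ} {μ : Finset (Fin n) → WithTop ℝ}
    (hne : ∃ B, μ B ≠ ⊤) : ∃ J : Finset (Fin n ⊕ Fin n), J.card = n ∧ conormal μ J ≠ ⊤ := by
  obtain ⟨B, hB⟩ := hne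
  have h₁ : part1 (B.disjSum Bᶜ) = B := by ext a; simp [part1]
  have h₂ : part2 (B.disjSum Bᶜ) = Bᶜ := by ext a; simp [part2]
  refine ⟨B.disjSum Bᶜ, by simp [card_disjSum], ?_⟩
  rw [conormal, h₁, h₂, compl_compl]
  exact WithTop.add_ne_top.2 ⟨hB, hB⟩

theorem conormal_isotropic_general {n : ℕ}
    (μ : Finset (Fin n) → WithTop ℝ)
    (hne : ∃ B, μ B ≠ ⊤) :
    (∀ J : Finset (Fin n ⊕ Fin n), J.card = n →
      conormal μ Jᶜ = conormal μ (J.image Sum.swap)) ∧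
    (∀ x ∈ TLS n (conormal μ), ∀ y ∈ TLS n (conormal μ),
      AAT (fun l : Fin n ⊕ Fin n => x l + y (Sum.swap l))) :=
  ⟨fun J _ => conormal_compl_eq_image_swap μ J, fun _ hx _ hy =>
    AAT_add_comp_of_mem_TLS (fun _ => Sum.swap_swap _) (by simp)
      (conormal_compl_eq_image_swap μ) (exists_card_eq_conormal_ne_top hne) hx hy⟩

/-- For every `n`-subset `J` of `[2n]` one has `(μ⊕μ*)_{[2n]∖J} = (μ⊕μ*)_{J̄}`, and
consequently (by Rincón's criterion) the conormal bundle `L_{μ⊕μ*}` is tropically isotropic. -/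
theorem conormal_isotropic {n k : ℕ}
    (μ : Finset (Fin n) → WithTop ℝ)
    (hsupp : ∀ B : Finset (Fin n), B.card ≠ k → μ B = ⊤)
    (hne : ∃ B, μ B ≠ ⊤)
    (hPl : ∀ S T : Finset (Fin n), S.card = k - 1 → T.card = k + 1 →
      AAT (fun i : {i : Fin n // i ∈ T ∧ i ∉ S} =>
        μ (T.erase (i : Fin n)) + μ (insert (i : Fin n) S))) :
    (∀ J : Finset (Fin n ⊕ Fin n), J.card = n →
      conormal μ Jᶜ = conormal μ (J.image Sum.swap)) ∧
    (∀ x ∈ TLS n (conormal μ), ∀ y ∈ TLS n (conormal μ),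
      AAT (fun l : Fin n ⊕ Fin n => x l + y (Sum.swap l))) :=
  conormal_isotropic_general μ hne
end

section
/- Let μ₁ be a valuated matroid of rank k on [n] and U_{0,2} the rank-0 valuated matroid on 2 elements (μ_∅ = 0). The direct sum μ₁ ⊕ U_{0,2} satisfies the tropical symplectic relations on [n+2] paired indices if and only if μ₁ satisfies the tropical symplectic relations, where in μ₁ ⊕ U_{0,2} the two new elements n+1 and its bar are paired with each other. -/
/-- The tropical symplectic relations for a vector `μ` of rank `k` on a paired ground set
`β ⊕ β` (element `i` paired with its barred copy `ī`): for every `(k−2)`-subset `S`, the minimum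
of `μ_{S∪{i,ī}}` over all pairs `{i,ī}` disjoint from `S` is attained at least twice or is `∞`. -/
def SympRel {β : Type*} [Fintype β] [DecidableEq β] (k : ℕ)
    (μ : Finset (β ⊕ β) → WithTop ℝ) : Prop :=
  ∀ S : Finset (β ⊕ β), S.card = k - 2 →
    AAT (fun i : {i : β // Sum.inl i ∉ S ∧ Sum.inr i ∉ S} =>
      μ (insert (Sum.inl (i : β)) (insert (Sum.inr (i : β)) S)))

/-- The direct sum `μ₁ ⊕ U_{0,2}`, where the two new elements (paired with each other) form the
ground set of the rank-0 uniform matroid `U_{0,2}` with `μ_∅ = 0`. The new ground set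
`(Fin n ⊕ Unit) ⊕ (Fin n ⊕ Unit)` pairs `i ↔ ī` and the two new elements with each other. -/
def sumU02 {n : ℕ} (μ₁ : Finset (Fin n ⊕ Fin n) → WithTop ℝ)
    (J : Finset ((Fin n ⊕ Unit) ⊕ (Fin n ⊕ Unit))) : WithTop ℝ :=
  if Sum.inl (Sum.inr ()) ∈ J ∨ Sum.inr (Sum.inr ()) ∈ J then ⊤
  else μ₁ (Finset.univ.filter fun a : Fin n ⊕ Fin n => Sum.map Sum.inl Sum.inl a ∈ J)

lemma AAT_iff_embed {ι κ : Type*} (f : ι → WithTop ℝ) (g : κ → WithTop ℝ)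
    (e : ι → κ) (he : Function.Injective e) (hval : ∀ i, g (e i) = f i)
    (htop : ∀ x : κ, (∀ i, e i ≠ x) → g x = ⊤) : AAT g ↔ AAT f := by
  constructor
  · rintro (hall | ⟨i, j, hij, hfij, hmin⟩)
    · exact Or.inl fun i => by rw [← hval i]; exact hall _
    · by_cases htopmin : g i = ⊤
      · refine Or.inl fun m => ?_
        have := hmin (e m)
        rw [htopmin, hval] at this
        exact top_le_iff.mp this
      · obtain ⟨i', rfl⟩ : ∃ i', e i' = i := by
          by_contra h
          push_neg at h
          exact htopmin (htop i fun m => h m)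
        by_cases hjtop : g j = ⊤
        · exact absurd (hfij.trans hjtop) htopmin
        obtain ⟨j', rfl⟩ : ∃ j', e j' = j := by
          by_contra h
          push_neg at h
          exact hjtop (htop j fun m => h m)
        refine Or.inr ⟨i', j', fun h => hij (by rw [h]), ?_, fun l => ?_⟩
        · rw [← hval, ← hval]; exact hfij
        · rw [← hval, ← hval]; exact hmin (e l)
  · rintro (hall | ⟨i, j, hij, hfij, hmin⟩)
    · refine Or.inl fun x => ?_
      by_cases hx : ∃ i, e i = x
      · obtain ⟨i, rfl⟩ := hx; rw [hval]; exact hall i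
      · push_neg at hx; exact htop x hx
    · refine Or.inr ⟨e i, e j, fun h => hij (he h), by rw [hval, hval]; exact hfij, fun x => ?_⟩
      by_cases hx : ∃ m, e m = x
      · obtain ⟨m, rfl⟩ := hx; rw [hval, hval]; exact hmin m
      · push_neg at hx; rw [hval, htop x hx]; exact le_top

lemma map_inj {n : ℕ} :
    Function.Injective (Sum.map Sum.inl Sum.inl : Fin n ⊕ Fin n → (Fin n ⊕ Unit) ⊕ (Fin n ⊕ Unit)) := by
  rintro (a | a) (b | b) h <;> simp_all

lemma sumU02_val {n : ℕ} (μ₁ : Finset (Fin n ⊕ Fin n) → WithTop ℝ)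
    (S : Finset (Fin n ⊕ Fin n)) (j : Fin n) :
    sumU02 μ₁ (insert (Sum.inl (Sum.inl j))
      (insert (Sum.inr (Sum.inl j)) (S.image (Sum.map Sum.inl Sum.inl)))) =
    μ₁ (insert (Sum.inl j) (insert (Sum.inr j) S)) := by
  rw [sumU02, if_neg]
  · congr 1
    ext a
    simp only [Finset.mem_filter, Finset.mem_univ, true_and, Finset.mem_insert,
      Finset.mem_image]
    constructor
    · rintro (h | h | ⟨b, hb, h⟩)
      · rcases a with a | a <;> simp_all
      · rcases a with a | a <;> simp_all
      · exact Or.inr (Or.inr (map_inj h ▸ hb))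
    · rintro (rfl | rfl | h)
      · exact Or.inl rfl
      · exact Or.inr (Or.inl rfl)
      · exact Or.inr (Or.inr ⟨a, h, rfl⟩)
  · simp only [Finset.mem_insert, Finset.mem_image, not_or]
    refine ⟨⟨by simp, by simp, ?_⟩, ⟨by simp, by simp, ?_⟩⟩ <;>
    · rintro ⟨(b | b), _, h⟩ <;> simp_all

lemma sumU02_top {n : ℕ} (μ₁ : Finset (Fin n ⊕ Fin n) → WithTop ℝ)
    (J : Finset ((Fin n ⊕ Unit) ⊕ (Fin n ⊕ Unit)))
    (h : Sum.inl (Sum.inr ()) ∈ J ∨ Sum.inr (Sum.inr ()) ∈ J) : sumU02 μ₁ J = ⊤ :=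
  if_pos h

/-- `μ₁ ⊕ U_{0,2}` satisfies the tropical symplectic relations if and only if `μ₁` does. -/
theorem sumU02_symplectic_iff {n k : ℕ}
    (μ₁ : Finset (Fin n ⊕ Fin n) → WithTop ℝ)
    (hsupp : ∀ B : Finset (Fin n ⊕ Fin n), B.card ≠ k → μ₁ B = ⊤)
    (hne : ∃ B, μ₁ B ≠ ⊤)
    (hPl : ∀ S T : Finset (Fin n ⊕ Fin n), S.card = k - 1 → T.card = k + 1 →
      AAT (fun i : {i : Fin n ⊕ Fin n // i ∈ T ∧ i ∉ S} =>
        μ₁ (T.erase (i : Fin n ⊕ Fin n)) + μ₁ (insert (i : Fin n ⊕ Fin n) S))) :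
    SympRel k (sumU02 μ₁) ↔ SympRel k μ₁ := by
  clear hsupp hne hPl
  have key : ∀ S₀ : Finset (Fin n ⊕ Fin n),
      AAT (fun i : {i : Fin n ⊕ Unit //
          Sum.inl i ∉ (S₀.image (Sum.map Sum.inl Sum.inl) :
            Finset ((Fin n ⊕ Unit) ⊕ (Fin n ⊕ Unit))) ∧
          Sum.inr i ∉ (S₀.image (Sum.map Sum.inl Sum.inl) :
            Finset ((Fin n ⊕ Unit) ⊕ (Fin n ⊕ Unit)))} =>
        sumU02 μ₁ (insert (Sum.inl (i : Fin n ⊕ Unit))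
          (insert (Sum.inr (i : Fin n ⊕ Unit)) (S₀.image (Sum.map Sum.inl Sum.inl))))) ↔
      AAT (fun i : {i : Fin n // Sum.inl i ∉ S₀ ∧ Sum.inr i ∉ S₀} =>
        μ₁ (insert (Sum.inl (i : Fin n)) (insert (Sum.inr (i : Fin n)) S₀))) := by
    intro S₀
    refine AAT_iff_embed _ _
      (fun i => ⟨(Sum.inl (i : Fin n) : Fin n ⊕ Unit), ?_, ?_⟩) ?_ ?_ ?_
    · simp only [Finset.mem_image]
      rintro ⟨(b | b), hb, h⟩ <;> simp_all
      exact i.2.1 (h ▸ hb)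
    · simp only [Finset.mem_image]
      rintro ⟨(b | b), hb, h⟩ <;> simp_all
      exact i.2.2 (h ▸ hb)
    · intro a b h
      have : Sum.inl (a : Fin n) = (Sum.inl (b : Fin n) : Fin n ⊕ Unit) :=
        congrArg Subtype.val h
      exact Subtype.ext (Sum.inl_injective this)
    · intro i
      exact sumU02_val μ₁ S₀ i
    · rintro ⟨(j | u), hx⟩ hne'
      · exfalso
        refine hne' ⟨j, ?_, ?_⟩ (Subtype.ext rfl)
        · intro h
          exact hx.1 (Finset.mem_image_of_mem _ h)
        · intro h
          exact hx.2 (Finset.mem_image_of_mem _ h)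
      · exact sumU02_top μ₁ _ (Or.inl (Finset.mem_insert_self _ _))
  constructor
  · intro H S₀ hS₀
    rw [← key S₀]
    exact H (S₀.image (Sum.map Sum.inl Sum.inl)) (by rw [Finset.card_image_of_injective _ map_inj, hS₀])
  · intro H S hS
    by_cases hnew : Sum.inl (Sum.inr ()) ∈ S ∨ Sum.inr (Sum.inr ()) ∈ S
    · exact Or.inl fun i => sumU02_top μ₁ _ (by
        rcases hnew with h | h
        · exact Or.inl (Finset.mem_insert_of_mem (Finset.mem_insert_of_mem h))
        · exact Or.inr (Finset.mem_insert_of_mem (Finset.mem_insert_of_mem h)))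
    · push_neg at hnew
      set S₀ : Finset (Fin n ⊕ Fin n) :=
        Finset.univ.filter (fun a => Sum.map Sum.inl Sum.inl a ∈ S) with hS₀def
      have hSeq : S = S₀.image (Sum.map Sum.inl Sum.inl) := by
        ext x
        simp only [hS₀def, Finset.mem_image, Finset.mem_filter, Finset.mem_univ, true_and]
        constructor
        · intro hx
          rcases x with (a | u) | (a | u)
          · exact ⟨Sum.inl a, hx, rfl⟩
          · exact absurd hx hnew.1
          · exact ⟨Sum.inr a, hx, rfl⟩
          · exact absurd hx hnew.2
        · rintro ⟨b, hb, rfl⟩; exact hb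
      have hcard : S₀.card = k - 2 := by
        rw [← hS, hSeq, Finset.card_image_of_injective _ map_inj]
      rw [hSeq]
      rw [key S₀]
      exact H S₀ hcard
end

section
/- Let μ be a valuated matroid of rank 2 on the ground set {1,…,n,1̄,…,n̄}. If the minimum of μ_{1 1̄}, μ_{2 2̄}, …, μ_{n n̄} is attained at least twice (or all equal ∞), and μ has rational entries and is realizable over the field of Puiseux series over an algebraically closed field K, then μ is realized by an isotropic 2-dimensional subspace: there exists a 2-dimensional subspace L of the Puiseux series field to the 2n with Plücker vector X satisfying val(X) = μ and X_{1 1̄} + X_{2 2̄} + ⋯ + X_{n n̄} = 0. -/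
/-- The valuation on the field of (generalized Puiseux/Hahn) series over `K` with rational
exponents, pushed to `ℝ ∪ {∞}`. -/
noncomputable def hval {K : Type*} [Field K] (f : HahnSeries ℚ K) : WithTop ℝ :=
  WithTop.map (Rat.cast : ℚ → ℝ) (HahnSeries.addVal ℚ K f)

/-!
Rescaling column `a` of a realizing matrix by a series `c a` of order `0` multiplies each
Plücker coordinate `X_{ab}` by `c a * c b`, so it keeps every valuation. Rescaling only the
barred columns turns `∑ X_{l l̄}` into `∑ c_l X_{l l̄}`, so it suffices to find series `c_l` of
order `0` with `∑ c_l X_{l l̄} = 0`. Let the minimal order `v` be attained at `i ≠ j`. Put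
`c_l = 1` for `l ≠ i, j` and `c_i = x ∈ K`, chosen (as `K` is infinite) so that the coefficient
of `t^v` in `Q = x X_{i ī} + ∑_{l ≠ i,j} X_{l l̄}` does not vanish. Then `Q` has order
`v = ord X_{j j̄}`, and `c_j = -Q / X_{j j̄}` has order `0`.
-/

open HahnSeries

namespace HahnSeries

variable {Γ K : Type*} [AddCommGroup Γ] [LinearOrder Γ] [IsOrderedAddMonoid Γ] [Field K]

theorem orderTop_C_of_ne_zero {x : K} (hx : x ≠ 0) : (C x : HahnSeries Γ K).orderTop = 0 := by
  rw [← order_eq_orderTop_of_ne_zero (C_ne_zero hx), order_C, WithTop.coe_zero]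

theorem orderTop_div_eq_zero {p q : HahnSeries Γ K} (hp : p ≠ 0)
    (h : q.orderTop = p.orderTop) : (q / p).orderTop = 0 := by
  refine WithTop.add_right_cancel (orderTop_ne_top.mpr hp) ?_
  rw [← orderTop_mul, div_mul_cancel₀ q hp, h, zero_add]

theorem exists_orderTop_C_mul_add_eq [Infinite K] {p r : HahnSeries Γ K} (hp : p ≠ 0)
    (hpr : p.orderTop ≤ r.orderTop) :
    ∃ x : K, x ≠ 0 ∧ (C x * p + r).orderTop = p.orderTop := by
  classical
  set v := p.order
  have hv : p.orderTop = v := (order_eq_orderTop_of_ne_zero hp).symm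
  have hpv : p.coeff v ≠ 0 := coeff_orderTop_ne hv
  obtain ⟨x, hx⟩ := Infinite.exists_notMem_finset ({0, -r.coeff v / p.coeff v} : Finset K)
  simp only [Finset.mem_insert, Finset.mem_singleton, not_or] at hx
  obtain ⟨hx0, hxv⟩ := hx
  refine ⟨x, hx0, le_antisymm ?_ ?_⟩
  · rw [hv]
    apply orderTop_le_of_coeff_ne_zero
    rw [coeff_add, C_mul_eq_smul, coeff_smul, smul_eq_mul]
    intro h0
    exact hxv (by rw [eq_div_iff hpv]; linear_combination h0)
  · refine le_trans (le_min ?_ hpr) min_orderTop_le_orderTop_add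
    rw [orderTop_mul, orderTop_C_of_ne_zero hx0, zero_add]

theorem exists_orderTop_eq_zero_sum_mul_eq_zero [Infinite K] {ι : Type*} [Fintype ι]
    [DecidableEq ι] (P : ι → HahnSeries Γ K) {i j : ι} (hij : i ≠ j)
    (hji : (P j).orderTop = (P i).orderTop) (hmin : ∀ l, (P i).orderTop ≤ (P l).orderTop) :
    ∃ c : ι → HahnSeries Γ K, (∀ l, (c l).orderTop = 0) ∧ ∑ l, c l * P l = 0 := by
  by_cases hPi : P i = 0
  · refine ⟨1, fun _ => orderTop_one, Finset.sum_eq_zero fun l _ => ?_⟩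
    have hl := hmin l
    rw [hPi, orderTop_zero, top_le_iff, orderTop_eq_top] at hl
    rw [hl, mul_zero]
  have hPj : P j ≠ 0 := by
    rwa [← orderTop_ne_top, hji, orderTop_ne_top]
  set R := ∑ l ∈ ({i, j} : Finset ι)ᶜ, P l
  have hR : (P i).orderTop ≤ R.orderTop := by
    simpa only [addVal_apply] using
      (addVal Γ K).map_le_sum (s := ({i, j} : Finset ι)ᶜ) fun l _ => hmin l
  obtain ⟨x, hx0, hQ⟩ := exists_orderTop_C_mul_add_eq hPi hR
  set Q := C x * P i + R
  let c : ι → HahnSeries Γ K := fun l => if l = i then C x else if l = j then -(Q / P j) else 1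
  refine ⟨c, fun l => ?_, ?_⟩
  · by_cases hli : l = i
    · simp only [c, if_pos hli, orderTop_C_of_ne_zero hx0]
    by_cases hlj : l = j
    · simp only [c, if_neg hli, if_pos hlj, orderTop_neg]
      exact orderTop_div_eq_zero hPj (hQ.trans hji.symm)
    · simp only [c, if_neg hli, if_neg hlj, orderTop_one]
  · have hcompl : ∑ l ∈ ({i, j} : Finset ι)ᶜ, c l * P l = R := by
      refine Finset.sum_congr rfl fun l hl => ?_
      simp only [Finset.mem_compl, Finset.mem_insert, Finset.mem_singleton, not_or] at hl
      simp only [c, if_neg hl.1, if_neg hl.2, one_mul]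
    have hci : c i = C x := if_pos rfl
    have hcj : c j = -(Q / P j) := by simp only [c, if_neg hij.symm, if_pos]
    rw [← Finset.sum_add_sum_compl {i, j}, hcompl, Finset.sum_pair hij, hci, hcj, neg_mul,
      div_mul_cancel₀ Q hPj]
    ring

end HahnSeries

section hval

variable {K : Type*} [Field K]

theorem hval_eq_top_iff {f : HahnSeries ℚ K} : hval f = ⊤ ↔ f = 0 := by
  rw [hval, WithTop.map_eq_top_iff, addVal_apply, orderTop_eq_top]

theorem hval_le_hval_iff {f g : HahnSeries ℚ K} : hval f ≤ hval g ↔ f.orderTop ≤ g.orderTop := by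
  rw [hval, hval, addVal_apply, addVal_apply]
  exact WithTop.map_le_iff _ fun {_ _} => Rat.cast_le

theorem hval_eq_hval_iff {f g : HahnSeries ℚ K} : hval f = hval g ↔ f.orderTop = g.orderTop := by
  simp only [le_antisymm_iff, hval_le_hval_iff]

theorem hval_mul_of_orderTop_eq_zero {u f : HahnSeries ℚ K} (hu : u.orderTop = 0) :
    hval (u * f) = hval f := by
  rw [hval, hval, addVal_apply, addVal_apply, orderTop_mul, hu, zero_add]

theorem exists_orderTop_eq_zero_sum_mul_eq_zero_of_AAT [Infinite K] {ι : Type*} [Fintype ι]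
    (P : ι → HahnSeries ℚ K) (h : AAT fun l => hval (P l)) :
    ∃ c : ι → HahnSeries ℚ K, (∀ l, (c l).orderTop = 0) ∧ ∑ l, c l * P l = 0 := by
  classical
  rcases h with htop | ⟨i, j, hij, hji, hmin⟩
  · refine ⟨1, fun _ => orderTop_one, Finset.sum_eq_zero fun l _ => ?_⟩
    rw [hval_eq_top_iff.mp (htop l), mul_zero]
  · exact exists_orderTop_eq_zero_sum_mul_eq_zero P hij (hval_eq_hval_iff.mp hji.symm)
      fun l => hval_le_hval_iff.mp (hmin l)

end hval

theorem LinearIndependent.mul_left_of_isUnit {R ι κ : Type*} [CommRing R] {v : κ → ι → R}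
    (hv : LinearIndependent R v) {c : ι → R} (hc : IsUnit c) :
    LinearIndependent R fun k => c * v k :=
  hv.map' (LinearMap.mulLeft R c) (LinearMap.ker_eq_bot.mpr hc.mul_right_injective)

/-- If a rank-2 valuated matroid `μ` on `{1,…,n,1̄,…,n̄}` is realizable over the series field
over an algebraically closed field `K` and the minimum of `μ_{11̄}, …, μ_{nn̄}` is attained at
least twice (or all `∞`), then `μ` is realized by an isotropic 2-dimensional subspace: there is
a realization whose Plücker vector `X` satisfies `X_{11̄} + ⋯ + X_{nn̄} = 0`. -/
theorem rank_two_symplectic_realizable {K : Type*} [Field K] [IsAlgClosed K] {n : ℕ}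
    (μ : (Fin n ⊕ Fin n) → (Fin n ⊕ Fin n) → WithTop ℝ)
    (M : Matrix (Fin 2) (Fin n ⊕ Fin n) (HahnSeries ℚ K))
    (hM : LinearIndependent (HahnSeries ℚ K) fun r : Fin 2 => M r)
    (hreal : ∀ a b : Fin n ⊕ Fin n,
      hval (M 0 a * M 1 b - M 0 b * M 1 a) = μ a b)
    (hmin : AAT (fun i : Fin n => μ (Sum.inl i) (Sum.inr i))) :
    ∃ M' : Matrix (Fin 2) (Fin n ⊕ Fin n) (HahnSeries ℚ K),
      (LinearIndependent (HahnSeries ℚ K) fun r : Fin 2 => M' r) ∧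
      (∀ a b : Fin n ⊕ Fin n,
        hval (M' 0 a * M' 1 b - M' 0 b * M' 1 a) = μ a b) ∧
      ∑ i : Fin n,
        (M' 0 (Sum.inl i) * M' 1 (Sum.inr i) - M' 0 (Sum.inr i) * M' 1 (Sum.inl i)) = 0 := by
  set P : Fin n → HahnSeries ℚ K :=
    fun l => M 0 (Sum.inl l) * M 1 (Sum.inr l) - M 0 (Sum.inr l) * M 1 (Sum.inl l)
  obtain ⟨c, hc, hsum⟩ := exists_orderTop_eq_zero_sum_mul_eq_zero_of_AAT P
    (by simpa only [P, hreal] using hmin)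
  set d : Fin n ⊕ Fin n → HahnSeries ℚ K := Sum.elim 1 c
  have hd : ∀ a, (d a).orderTop = 0 := by
    rintro (l | l)
    exacts [orderTop_one, hc l]
  have hminor : ∀ a b, (d * M 0) a * (d * M 1) b - (d * M 0) b * (d * M 1) a
      = d a * (d b * (M 0 a * M 1 b - M 0 b * M 1 a)) := fun a b => by
    simp only [Pi.mul_apply]; ring
  refine ⟨fun r => d * M r, hM.mul_left_of_isUnit ?_, fun a b => ?_, ?_⟩
  · exact Pi.isUnit_iff.mpr fun a => isUnit_iff_ne_zero.mpr <| orderTop_ne_top.mp <| by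
      rw [hd a]; exact WithTop.coe_ne_top
  · rw [hminor, hval_mul_of_orderTop_eq_zero (hd a), hval_mul_of_orderTop_eq_zero (hd b), hreal]
  · simpa only [hminor, d, Sum.elim_inl, Sum.elim_inr, Pi.one_apply, one_mul] using hsum
end

section
/- Let M be the rank-2 matroid on {1,2,3,1̄,2̄,3̄} whose parallel classes are {1,1̄}, {2,2̄}, {3}, {3̄} (bases are all 2-subsets except {1,1̄} and {2,2̄}). Then the Bergman fan (tropical linear space) L_M ⊆ T^6 is tropically isotropic: any two points x, y ∈ L_M satisfy that the minimum of x_i + y_{ī} over i ∈ [6] is attained at least twice or is ∞. However, the tropical symplectic relation min(μ_{11̄}, μ_{22̄}, μ_{33̄}) (with μ the {0,∞}-Plücker vector of M) is attained only once (at μ_{33̄} = 0, with μ_{11̄} = μ_{22̄} = ∞), so M does not satisfy the tropical symplectic relations. -/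
/-- The `{0,∞}`-Plücker vector of the rank-2 matroid on `{1,2,3,1̄,2̄,3̄}` with parallel classes
`{1,1̄}, {2,2̄}, {3}, {3̄}`: bases are all `2`-subsets except `{1,1̄}` and `{2,2̄}`. -/
def mu4pts (B : Finset (Fin 3 ⊕ Fin 3)) : WithTop ℝ :=
  if B.card = 2 ∧ B ≠ {Sum.inl 0, Sum.inr 0} ∧ B ≠ {Sum.inl 1, Sum.inr 1} then 0 else ⊤
/-!
Points of `L_M` are constant on the parallel classes `{1,1̄}` and `{2,2̄}`, and on the
representatives `1, 2, 3, 3̄` they lie in the tropical line of `U_{2,4}`: in every triple the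
minimum is attained twice. In the pairing the terms at `i` and `ī` coincide for `i = 1, 2`, so
isotropy can only fail through a strict minimum at `3` (or symmetrically `3̄`). If
`x_3 + y_3̄` were below `x_1 + y_1`, `x_2 + y_2` and `x_3̄ + y_3`, then in each comparison
`x_3` or `y_3̄` is the strictly smaller summand; by pigeonhole one of them is strictly below two
other coordinates of its vector, a triple with a unique minimum.
-/

open Finset Function

theorem aat_iff_forall_exists_ne_le {ι : Type*} [Finite ι] [Nontrivial ι] {f : ι → WithTop ℝ} :
    AAT f ↔ ∀ i, ∃ j ≠ i, f j ≤ f i := by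
  constructor
  · rintro (htop | ⟨a, b, hab, heq, hmin⟩) i
    · obtain ⟨j, hj⟩ := exists_ne i
      exact ⟨j, hj, by rw [htop i, htop j]⟩
    · by_cases hai : a = i
      · subst hai
        exact ⟨b, hab.symm, heq.symm.le⟩
      · exact ⟨a, hai, hmin i⟩
  · intro h
    obtain ⟨i, hi⟩ := Finite.exists_min f
    obtain ⟨j, hji, hj⟩ := h i
    exact Or.inr ⟨i, j, hji.symm, le_antisymm (hi j) hj, hi⟩

section TLS

variable {m : Type*} [Fintype m] [DecidableEq m] {ν : Finset m → WithTop ℝ} {x : m → WithTop ℝ}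

theorem exists_ne_le_of_mem_TLS {r : ℕ} (hr : 0 < r) (hx : x ∈ TLS r ν) {T : Finset m}
    (hT : #T = r + 1) {i : m} (hi : i ∈ T) :
    ∃ j ∈ T, j ≠ i ∧ ν (T.erase j) + x j ≤ ν (T.erase i) + x i := by
  have : Nontrivial T := (one_lt_card_iff_nontrivial.mp (by omega)).coe_sort
  obtain ⟨⟨j, hj⟩, hji, hle⟩ := aat_iff_forall_exists_ne_le.mp (hx T hT) ⟨i, hi⟩
  exact ⟨j, hj, fun h => hji (Subtype.ext h), hle⟩

theorem le_or_le_of_mem_TLS_two (hx : x ∈ TLS 2 ν) {a b c : m} (hab : a ≠ b) (hac : a ≠ c)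
    (hbc : b ≠ c) :
    ν {a, c} + x b ≤ ν {b, c} + x a ∨ ν {a, b} + x c ≤ ν {b, c} + x a := by
  obtain ⟨j, hj, hja, hle⟩ :=
    exists_ne_le_of_mem_TLS two_pos hx (card_eq_three.mpr ⟨a, b, c, hab, hac, hbc, rfl⟩)
      (mem_insert_self a {b, c})
  rw [erase_insert (by simp [hab, hac])] at hle
  rcases mem_insert.mp hj with rfl | hj
  · exact absurd rfl hja
  rcases mem_insert.mp hj with rfl | hj
  · rw [erase_insert_of_ne hab, erase_insert (by simpa using hbc)] at hle
    exact Or.inl hle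
  · rw [mem_singleton.mp hj, erase_insert_of_ne hac, erase_insert_of_ne hbc, erase_singleton,
      insert_empty_eq] at hle
    exact Or.inr hle

theorem eq_of_mem_TLS_two_of_parallel (hx : x ∈ TLS 2 ν) {a b c : m} (hab : a ≠ b)
    (hac : a ≠ c) (hbc : b ≠ c) (hpar : ν {a, b} = ⊤) (hac0 : ν {a, c} = 0)
    (hbc0 : ν {b, c} = 0) : x a = x b := by
  have le_of_parallel : ∀ {a b : m}, a ≠ b → a ≠ c → b ≠ c → ν {a, b} = ⊤ → ν {a, c} = 0 →
      ν {b, c} = 0 → x b ≤ x a := by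
    intro a b hab hac hbc hpar hac0 hbc0
    rcases le_or_le_of_mem_TLS_two hx hab hac hbc with hle | hle
    · simpa [hac0, hbc0] using hle
    · rw [hpar, hbc0, top_add, zero_add, top_le_iff] at hle
      exact hle ▸ le_top
  exact le_antisymm (le_of_parallel hab.symm hbc hac (pair_comm a b ▸ hpar) hbc0 hac0)
    (le_of_parallel hab hac hbc hpar hac0 hbc0)

end TLS

def MinAttainedTwiceOnTriples {ι α : Type*} [LinearOrder α] (u : ι → α) : Prop :=
  ∀ i j k, j ≠ k → min (u j) (u k) ≤ u i

theorem MinAttainedTwiceOnTriples.exists_add_le_add {ι α : Type*} [Add α] [LinearOrder α]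
    [AddLeftMono α] [AddRightMono α] {u v : ι → α} (hu : MinAttainedTwiceOnTriples u)
    (hv : MinAttainedTwiceOnTriples v) (i i' : ι) {j j' : Fin 3 → ι} (hj : Injective j)
    (hj' : Injective j') : ∃ n, u (j n) + v (j' n) ≤ u i + v i' := by
  by_contra! hlt
  have hside : ∀ n, u i < u (j n) ∨ v i' < v (j' n) := fun n => lt_or_lt_of_add_lt_add (hlt n)
  obtain ⟨p, q, hpq, hsame⟩ :=
    Fintype.exists_ne_map_eq_of_card_lt (fun n => decide (u i < u (j n))) (by simp)
  by_cases hp : u i < u (j p)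
  · have hq : u i < u (j q) := by simpa [hp] using hsame.symm
    exact (hu i _ _ (hj.ne hpq)).not_gt (lt_min hp hq)
  · have hq : ¬ u i < u (j q) := by simpa [hp] using hsame.symm
    exact (hv i' _ _ (hj'.ne hpq)).not_gt
      (lt_min ((hside p).resolve_left hp) ((hside q).resolve_left hq))

def classRep : Fin 4 → Fin 3 ⊕ Fin 3 := ![.inl 0, .inl 1, .inl 2, .inr 2]

theorem mu4pts_pair_classRep {a b : Fin 4} (hab : a ≠ b) : mu4pts {classRep a, classRep b} = 0 :=
  if_pos (by revert a b; decide)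

theorem mem_TLS_mu4pts_parallel {x : Fin 3 ⊕ Fin 3 → WithTop ℝ} (hx : x ∈ TLS 2 mu4pts)
    {k : Fin 3} (hk : k ≠ 2) : x (.inl k) = x (.inr k) := by
  rcases (by omega : k = 0 ∨ k = 1) with rfl | rfl <;>
    exact eq_of_mem_TLS_two_of_parallel (c := .inl 2) hx (by simp) (by simp) (by simp)
      (if_neg (by decide)) (if_pos (by decide)) (if_pos (by decide))

theorem minAttainedTwiceOnTriples_classRep {x : Fin 3 ⊕ Fin 3 → WithTop ℝ}
    (hx : x ∈ TLS 2 mu4pts) : MinAttainedTwiceOnTriples (x ∘ classRep) := by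
  intro i j k hjk
  by_cases hij : i = j
  · exact hij ▸ min_le_left _ _
  by_cases hik : i = k
  · exact hik ▸ min_le_right _ _
  have hrep : Injective classRep := by decide
  rcases le_or_le_of_mem_TLS_two hx (hrep.ne hij) (hrep.ne hik) (hrep.ne hjk) with hle | hle
  · rw [mu4pts_pair_classRep hik, mu4pts_pair_classRep hjk, zero_add, zero_add] at hle
    exact min_le_of_left_le hle
  · rw [mu4pts_pair_classRep hij, mu4pts_pair_classRep hjk, zero_add, zero_add] at hle
    exact min_le_of_right_le hle

theorem exists_ne_pairing_le_inl_two {x y : Fin 3 ⊕ Fin 3 → WithTop ℝ} (hx : x ∈ TLS 2 mu4pts)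
    (hy : y ∈ TLS 2 mu4pts) :
    ∃ l ≠ .inl 2, x l + y l.swap ≤ x (.inl 2) + y (.inr 2) := by
  obtain ⟨n, hn⟩ := (minAttainedTwiceOnTriples_classRep hx).exists_add_le_add
    (minAttainedTwiceOnTriples_classRep hy) 2 3 (j := ![0, 1, 3]) (j' := ![0, 1, 2])
    (by decide) (by decide)
  fin_cases n
  · refine ⟨.inr 0, by simp, ?_⟩
    simpa [classRep, mem_TLS_mu4pts_parallel hx, mem_TLS_mu4pts_parallel hy] using hn
  · refine ⟨.inr 1, by simp, ?_⟩
    simpa [classRep, mem_TLS_mu4pts_parallel hx, mem_TLS_mu4pts_parallel hy] using hn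
  · exact ⟨.inr 2, by simp, by simpa [classRep] using hn⟩

theorem mu4pts_isotropic {x y : Fin 3 ⊕ Fin 3 → WithTop ℝ} (hx : x ∈ TLS 2 mu4pts)
    (hy : y ∈ TLS 2 mu4pts) : AAT (fun l => x l + y l.swap) := by
  have : Nontrivial (Fin 3 ⊕ Fin 3) := nontrivial_of_ne (.inl 0) (.inr 0) Sum.inl_ne_inr
  rw [aat_iff_forall_exists_ne_le]
  rintro (k | k) <;> by_cases hk : k = 2
  · exact hk ▸ exists_ne_pairing_le_inl_two hx hy
  · refine ⟨.inr k, by simp, ?_⟩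
    simp [mem_TLS_mu4pts_parallel hx hk, mem_TLS_mu4pts_parallel hy hk]
  · obtain ⟨l, hl, hle⟩ := exists_ne_pairing_le_inl_two hy hx
    refine ⟨l.swap, ?_, ?_⟩
    · exact fun h => hl (by simpa [hk] using congrArg Sum.swap h)
    · simpa [hk, add_comm] using hle
  · refine ⟨.inl k, by simp, ?_⟩
    simp [mem_TLS_mu4pts_parallel hx hk, mem_TLS_mu4pts_parallel hy hk]

theorem mu4pts_not_symplectic : ¬ AAT (fun i : Fin 3 => mu4pts {.inl i, .inr i}) := by
  have h0 : mu4pts {.inl 0, .inr 0} = ⊤ := if_neg (by decide)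
  have h1 : mu4pts {.inl 1, .inr 1} = ⊤ := if_neg (by decide)
  have h2 : mu4pts {.inl 2, .inr 2} = 0 := if_pos (by decide)
  rw [aat_iff_forall_exists_ne_le]
  intro h
  obtain ⟨j, hj, hle⟩ := h 2
  fin_cases j <;> simp_all

/-- The tropical linear space of this matroid is tropically isotropic, yet the matroid fails
the rank-2 tropical symplectic relation `min(μ_{11̄}, μ_{22̄}, μ_{33̄})` (attained only once). -/
theorem mu4pts_isotropic_not_symplectic :
    (∀ x ∈ TLS 2 mu4pts, ∀ y ∈ TLS 2 mu4pts,
      AAT (fun l : Fin 3 ⊕ Fin 3 => x l + y (Sum.swap l))) ∧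
    ¬ AAT (fun i : Fin 3 => mu4pts {Sum.inl i, Sum.inr i}) :=
  ⟨fun _ hx _ hy => mu4pts_isotropic hx hy, mu4pts_not_symplectic⟩
end

section
/- Consider the 2×4 tropical matrix (A|B) with A = ((0,1),(0,0)) and B = ((0,1),(0,0)) over T = ℝ∪{∞} (min-plus). Then A ⊙ Bᵀ = ((0,0),(0,0)) is symmetric, but the valuated matroid μ = π(A|B) (tropical 2×2 minors, pairing 1↔3, 2↔4 of the columns) satisfies μ_{1 1̄} = 0 and μ_{2 2̄} = 1, so the tropical relation min(μ_{1 1̄}, μ_{2 2̄}) is attained only once; hence μ is not in the symplectic Dressian SpDr(2,4) and L_μ is not isotropic. -/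
/-- The matrix `A` of the example. -/
def A16 : Matrix (Fin 2) (Fin 2) (WithTop ℝ) := !![0, 1; 0, 0]

/-- The matrix `B` of the example. -/
def B16 : Matrix (Fin 2) (Fin 2) (WithTop ℝ) := !![0, 1; 0, 0]

/-- The block matrix `(A|B)`, columns indexed by `Fin 2 ⊕ Fin 2` with pairing `Sum.swap`. -/
def C16 : Matrix (Fin 2) (Fin 2 ⊕ Fin 2) (WithTop ℝ) := fun r => Sum.elim (A16 r) (B16 r)

/-- The tropical `2×2` minor of `(A|B)` on columns `a, b`. -/
noncomputable def tmin16 (a b : Fin 2 ⊕ Fin 2) : WithTop ℝ :=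
  min (C16 0 a + C16 1 b) (C16 0 b + C16 1 a)

/-- The valuated matroid `μ = π(A|B)` as a function on `2`-subsets of the columns. -/
noncomputable def mu16 (S : Finset (Fin 2 ⊕ Fin 2)) : WithTop ℝ :=
  Finset.univ.inf fun p : (Fin 2 ⊕ Fin 2) × (Fin 2 ⊕ Fin 2) =>
    if p.1 ≠ p.2 ∧ S = {p.1, p.2} then tmin16 p.1 p.2 else ⊤

lemma tmin_comm (a b : Fin 2 ⊕ Fin 2) : tmin16 a b = tmin16 b a := by
  unfold tmin16; exact min_comm _ _

lemma finset_pair_eq {α : Type*} [DecidableEq α] {a b c d : α} (hab : a ≠ b)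
    (h : ({a, b} : Finset α) = {c, d}) : (a = c ∧ b = d) ∨ (a = d ∧ b = c) := by
  have ha : a ∈ ({c, d} : Finset α) := h ▸ Finset.mem_insert_self a {b}
  have hb : b ∈ ({c, d} : Finset α) := h ▸ Finset.mem_insert_of_mem (Finset.mem_singleton_self b)
  simp only [Finset.mem_insert, Finset.mem_singleton] at ha hb
  rcases ha with rfl | rfl <;> rcases hb with rfl | rfl <;> tauto

lemma mu_pair (a b : Fin 2 ⊕ Fin 2) (hab : a ≠ b) : mu16 {a, b} = tmin16 a b := by
  apply le_antisymm
  · exact (Finset.inf_le (Finset.mem_univ (a, b))).trans_eq (if_pos ⟨hab, rfl⟩)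
  · apply Finset.le_inf
    intro p _
    by_cases hc : p.1 ≠ p.2 ∧ ({a, b} : Finset (Fin 2 ⊕ Fin 2)) = {p.1, p.2}
    · rw [if_pos hc]
      rcases finset_pair_eq hab hc.2 with ⟨h1, h2⟩ | ⟨h1, h2⟩
      · rw [h1, h2]
      · rw [h1, h2, tmin_comm]
    · rw [if_neg hc]; exact le_top

lemma m1 : mu16 {Sum.inl 0, Sum.inl 1} = 0 := by
  rw [mu_pair _ _ (by decide)]; simp [tmin16, C16, A16, B16]
lemma m2 : mu16 {Sum.inl 0, Sum.inr 0} = 0 := by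
  rw [mu_pair _ _ (by decide)]; simp [tmin16, C16, A16, B16]
lemma m3 : mu16 {Sum.inl 0, Sum.inr 1} = 0 := by
  rw [mu_pair _ _ (by decide)]; simp [tmin16, C16, A16, B16]
lemma m4 : mu16 {Sum.inl 1, Sum.inr 0} = 0 := by
  rw [mu_pair _ _ (by decide)]; simp [tmin16, C16, A16, B16]
lemma m5 : mu16 {Sum.inl 1, Sum.inr 1} = 1 := by
  rw [mu_pair _ _ (by decide)]; simp [tmin16, C16, A16, B16]
lemma m6 : mu16 {Sum.inr 0, Sum.inr 1} = 0 := by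
  rw [mu_pair _ _ (by decide)]; simp [tmin16, C16, A16, B16]

noncomputable def x16 : (Fin 2 ⊕ Fin 2) → WithTop ℝ := Sum.elim ![⊤, 0] ![0, 0]
noncomputable def y16 : (Fin 2 ⊕ Fin 2) → WithTop ℝ := Sum.elim ![0, ⊤] ![0, 1]

lemma card3 (T : Finset (Fin 2 ⊕ Fin 2)) (h : T.card = 3) :
    T = {Sum.inl 0, Sum.inl 1, Sum.inr 0} ∨ T = {Sum.inl 0, Sum.inl 1, Sum.inr 1} ∨
    T = {Sum.inl 0, Sum.inr 0, Sum.inr 1} ∨ T = {Sum.inl 1, Sum.inr 0, Sum.inr 1} := by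
  revert h; revert T; decide

-- erase lemmas
lemma eA0 : ({Sum.inl 0, Sum.inl 1, Sum.inr 0} : Finset (Fin 2 ⊕ Fin 2)).erase (Sum.inl 0) = {Sum.inl 1, Sum.inr 0} := by decide
lemma eA1 : ({Sum.inl 0, Sum.inl 1, Sum.inr 0} : Finset (Fin 2 ⊕ Fin 2)).erase (Sum.inl 1) = {Sum.inl 0, Sum.inr 0} := by decide
lemma eA2 : ({Sum.inl 0, Sum.inl 1, Sum.inr 0} : Finset (Fin 2 ⊕ Fin 2)).erase (Sum.inr 0) = {Sum.inl 0, Sum.inl 1} := by decide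
lemma eB0 : ({Sum.inl 0, Sum.inl 1, Sum.inr 1} : Finset (Fin 2 ⊕ Fin 2)).erase (Sum.inl 0) = {Sum.inl 1, Sum.inr 1} := by decide
lemma eB1 : ({Sum.inl 0, Sum.inl 1, Sum.inr 1} : Finset (Fin 2 ⊕ Fin 2)).erase (Sum.inl 1) = {Sum.inl 0, Sum.inr 1} := by decide
lemma eB2 : ({Sum.inl 0, Sum.inl 1, Sum.inr 1} : Finset (Fin 2 ⊕ Fin 2)).erase (Sum.inr 1) = {Sum.inl 0, Sum.inl 1} := by decide
lemma eC0 : ({Sum.inl 0, Sum.inr 0, Sum.inr 1} : Finset (Fin 2 ⊕ Fin 2)).erase (Sum.inl 0) = {Sum.inr 0, Sum.inr 1} := by decide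
lemma eC1 : ({Sum.inl 0, Sum.inr 0, Sum.inr 1} : Finset (Fin 2 ⊕ Fin 2)).erase (Sum.inr 0) = {Sum.inl 0, Sum.inr 1} := by decide
lemma eC2 : ({Sum.inl 0, Sum.inr 0, Sum.inr 1} : Finset (Fin 2 ⊕ Fin 2)).erase (Sum.inr 1) = {Sum.inl 0, Sum.inr 0} := by decide
lemma eD0 : ({Sum.inl 1, Sum.inr 0, Sum.inr 1} : Finset (Fin 2 ⊕ Fin 2)).erase (Sum.inl 1) = {Sum.inr 0, Sum.inr 1} := by decide
lemma eD1 : ({Sum.inl 1, Sum.inr 0, Sum.inr 1} : Finset (Fin 2 ⊕ Fin 2)).erase (Sum.inr 0) = {Sum.inl 1, Sum.inr 1} := by decide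
lemma eD2 : ({Sum.inl 1, Sum.inr 0, Sum.inr 1} : Finset (Fin 2 ⊕ Fin 2)).erase (Sum.inr 1) = {Sum.inl 1, Sum.inr 0} := by decide

lemma x_mem : x16 ∈ TLS 2 mu16 := by
  intro T hT
  rcases card3 T hT with h | h | h | h <;> subst h
  · exact Or.inr ⟨⟨Sum.inl 1, by decide⟩, ⟨Sum.inr 0, by decide⟩, by decide,
      by simp [eA1, eA2, m2, m1, x16],
      by rintro ⟨(l | l), hl⟩ <;> fin_cases l <;>
        first | exact absurd hl (by decide) | simp_all [eA0, eA1, eA2, m1, m2, m4, x16]⟩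
  · exact Or.inr ⟨⟨Sum.inl 1, by decide⟩, ⟨Sum.inr 1, by decide⟩, by decide,
      by simp [eB1, eB2, m3, m1, x16],
      by rintro ⟨(l | l), hl⟩ <;> fin_cases l <;>
        first | exact absurd hl (by decide) | simp_all [eB0, eB1, eB2, m1, m3, m5, x16]⟩
  · exact Or.inr ⟨⟨Sum.inr 0, by decide⟩, ⟨Sum.inr 1, by decide⟩, by decide,
      by simp [eC1, eC2, m3, m2, x16],
      by rintro ⟨(l | l), hl⟩ <;> fin_cases l <;>
        first | exact absurd hl (by decide) | simp_all [eC0, eC1, eC2, m2, m3, m6, x16]⟩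
  · exact Or.inr ⟨⟨Sum.inl 1, by decide⟩, ⟨Sum.inr 1, by decide⟩, by decide,
      by simp [eD0, eD2, m6, m4, x16],
      by rintro ⟨(l | l), hl⟩ <;> fin_cases l <;>
        first | exact absurd hl (by decide) | simp_all [eD0, eD1, eD2, m4, m5, m6, x16]⟩

lemma y_mem : y16 ∈ TLS 2 mu16 := by
  intro T hT
  rcases card3 T hT with h | h | h | h <;> subst h
  · exact Or.inr ⟨⟨Sum.inl 0, by decide⟩, ⟨Sum.inr 0, by decide⟩, by decide,
      by simp [eA0, eA2, m4, m1, y16],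
      by rintro ⟨(l | l), hl⟩ <;> fin_cases l <;>
        first | exact absurd hl (by decide) | simp_all [eA0, eA1, eA2, m1, m2, m4, y16]⟩
  · exact Or.inr ⟨⟨Sum.inl 0, by decide⟩, ⟨Sum.inr 1, by decide⟩, by decide,
      by simp [eB0, eB2, m5, m1, y16],
      by rintro ⟨(l | l), hl⟩ <;> fin_cases l <;>
        first | exact absurd hl (by decide) | simp_all [eB0, eB1, eB2, m1, m3, m5, y16]⟩
  · exact Or.inr ⟨⟨Sum.inl 0, by decide⟩, ⟨Sum.inr 0, by decide⟩, by decide,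
      by simp [eC0, eC1, m6, m3, y16],
      by rintro ⟨(l | l), hl⟩ <;> fin_cases l <;>
        first | exact absurd hl (by decide) | simp_all [eC0, eC1, eC2, m2, m3, m6, y16]⟩
  · exact Or.inr ⟨⟨Sum.inr 0, by decide⟩, ⟨Sum.inr 1, by decide⟩, by decide,
      by simp [eD1, eD2, m5, m4, y16],
      by rintro ⟨(l | l), hl⟩ <;> fin_cases l <;>
        first | exact absurd hl (by decide) | simp_all [eD0, eD1, eD2, m4, m5, m6, y16]⟩


/-- For this example `A ⊙ Bᵀ` is symmetric, yet `μ_{11̄} = 0` and `μ_{22̄} = 1`, so the tropical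
symplectic relation fails and `L_μ` is not isotropic. -/
theorem symmetric_presentation_not_isotropic :
    (∀ i j : Fin 2,
      (Finset.univ.inf fun l : Fin 2 => A16 i l + B16 j l) =
        Finset.univ.inf fun l : Fin 2 => A16 j l + B16 i l) ∧
    tmin16 (Sum.inl 0) (Sum.inr 0) = 0 ∧
    tmin16 (Sum.inl 1) (Sum.inr 1) = 1 ∧
    ¬ AAT (fun i : Fin 2 => tmin16 (Sum.inl i) (Sum.inr i)) ∧
    ¬ (∀ x ∈ TLS 2 mu16, ∀ y ∈ TLS 2 mu16,
        AAT (fun l : Fin 2 ⊕ Fin 2 => x l + y (Sum.swap l))) := by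
  have t00 : tmin16 (Sum.inl 0) (Sum.inr 0) = 0 := by simp [tmin16, C16, A16, B16]
  have t11 : tmin16 (Sum.inl 1) (Sum.inr 1) = 1 := by simp [tmin16, C16, A16, B16]
  refine ⟨?_, t00, t11, ?_, ?_⟩
  · intro i j
    have hu : (Finset.univ : Finset (Fin 2)) = {0, 1} := rfl
    fin_cases i <;> fin_cases j <;>
      simp [A16, B16, hu, Finset.inf_insert, Finset.inf_singleton] <;> norm_num [min_comm]
  · rintro (h | ⟨i, j, hij, heq, hle⟩)
    · have := h 0
      simp only [t00] at this
      exact (by norm_num : (0 : WithTop ℝ) ≠ ⊤) this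
    · fin_cases i <;> fin_cases j <;> simp_all [t00, t11] <;> norm_num at *
  · intro h
    have := h x16 x_mem y16 y_mem
    rcases this with h' | ⟨i, j, hij, heq, hle⟩
    · have := h' (Sum.inr 0)
      simp [x16, y16] at this
    · have h0 := hle (Sum.inr 0)
      rcases i with (i | i) <;> fin_cases i <;>
        rcases j with (j | j) <;> fin_cases j <;>
        simp_all [x16, y16] <;> norm_num at *
end

section
/- For valuated matroids realizable over an algebraically closed valued field K of characteristic p with surjective valuation, membership in the tropical symplectic Grassmannian implies membership in the symplectic Dressian: if μ = val(X) for the Plücker vector X of an isotropic subspace L ⊆ K^{2n} of dimension k, then for every (k−2)-subset S of [2n], the minimum of μ_{S∪{i,ī}} over i ∈ [n] with {i,ī} ∩ S = ∅ is attained at least twice or is ∞. -/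
/-- The Plücker coordinate of the row space of `M` indexed by a `k`-subset `J` of the columns
(the maximal minor on the columns of `J` in increasing order), and `0` if `J.card ≠ k`. -/
noncomputable def pluckerCoord {K : Type*} [CommRing K] {k : ℕ} {ι : Type*} [LinearOrder ι]
    [DecidableEq ι] (M : Matrix (Fin k) ι K) (J : Finset ι) : K :=
  if h : J.card = k then
    (M.submatrix id fun a : Fin k => ((J.orderIsoOfFin h) a : ι)).det
  else 0

open Finset Matrix

theorem AddValuation.aat_of_sum_eq_zero {R ι : Type*} [Ring R] [Fintype ι]
    (v : AddValuation R (WithTop ℝ)) (f : ι → R) (hf : ∑ i, f i = 0) :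
    AAT fun i => v (f i) := by
  classical
  by_cases htop : ∀ i, v (f i) = ⊤
  · exact Or.inl htop
  obtain ⟨i₀, hi₀⟩ := not_forall.mp htop
  obtain ⟨m, -, hm⟩ := exists_min_image univ (fun i => v (f i)) ⟨i₀, mem_univ _⟩
  obtain ⟨j, hjm, hj⟩ : ∃ j, j ≠ m ∧ v (f j) = v (f m) := by
    by_contra! hne
    have hlt : v (f m) < v (∑ j ∈ univ.erase m, f j) :=
      v.map_lt_sum (ne_top_of_le_ne_top hi₀ (hm i₀ (mem_univ _)))
        fun j hj => (hm j (mem_univ _)).lt_of_ne (hne j (ne_of_mem_erase hj)).symm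
    rw [sum_erase_eq_sub (mem_univ m), hf, zero_sub, v.map_neg] at hlt
    exact hlt.false
  exact Or.inr ⟨m, j, hjm.symm, hj.symm, fun l => hm l (mem_univ _)⟩

theorem AddValuation.map_units_int_smul {R : Type*} [Ring R] (v : AddValuation R (WithTop ℝ))
    (ε : ℤˣ) (x : R) : v (ε • x) = v x := by
  rcases Int.units_eq_one_or ε with rfl | rfl <;> simp

theorem map_eq_top_of_map_one_eq_top {M : Type*} [MulOneClass M] {v : M → WithTop ℝ}
    (hmul : ∀ x y, v (x * y) = v x + v y) (h1 : v 1 = ⊤) (x : M) : v x = ⊤ := by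
  simpa [h1] using hmul x 1

theorem map_one_eq_zero_of_ne_top {M : Type*} [MulOneClass M] {v : M → WithTop ℝ}
    (hmul : ∀ x y, v (x * y) = v x + v y) (h1 : v 1 ≠ ⊤) : v 1 = 0 := by
  have h := hmul 1 1
  rw [mul_one] at h
  lift v 1 to ℝ using h1 with r
  norm_cast at h ⊢
  linarith

theorem sum_sum_mul_eq_zero_of_symm_of_alt {R ι : Type*} [CommRing R] [Fintype ι]
    (P E : ι → ι → R) (hP : ∀ a b, P a b = P b a) (hE : ∀ a b, E b a = -E a b)
    (hE₀ : ∀ a, E a a = 0) : ∑ a, ∑ b, P a b * E a b = 0 := by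
  rw [← sum_product']
  refine sum_ninvolution Prod.swap (fun ⟨a, b⟩ => ?_) (fun ⟨a, b⟩ hab h => ?_)
    (fun _ => mem_univ _) Prod.swap_swap
  · simp only [Prod.fst_swap, Prod.snd_swap, hP b a, hE b a]
    ring
  · obtain rfl : b = a := congrArg Prod.fst h
    simp [hE₀] at hab

theorem LinearMap.IsAlt.sum_apply_eq_zero {R ι κ : Type*} [CommRing R] [Fintype ι]
    [DecidableEq ι] [Fintype κ] {B : (ι → R) →ₗ[R] (ι → R) →ₗ[R] R} (hB : B.IsAlt)
    (u w : κ → ι → R) (huw : ∀ a b, ∑ i, u i a * w i b = ∑ i, u i b * w i a) :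
    ∑ i, B (u i) (w i) = 0 := by
  set E := LinearMap.toMatrix₂' R B
  have hexpand : ∀ x y, B x y = ∑ a, ∑ b, x a * y b * E a b := fun x y => by
    rw [← Matrix.toLinearMap₂'_toMatrix' (R := R) B, Matrix.toLinearMap₂'_apply]
    simp only [smul_eq_mul, mul_assoc, E]
  calc ∑ i, B (u i) (w i)
      = ∑ a, ∑ b, (∑ i, u i a * w i b) * E a b := by
        simp only [hexpand, sum_mul]
        rw [sum_comm]
        exact sum_congr rfl fun a _ => sum_comm
    _ = 0 := sum_sum_mul_eq_zero_of_symm_of_alt _ E huw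
        (fun a b => (hB.neg _ _).symm) (fun a => hB _)

namespace AlternatingMap

variable {R M : Type*} [CommRing R] [AddCommGroup M] [Module R M] {m : ℕ}

def bilinOfCons (f : M [⋀^Fin (m + 2)]→ₗ[R] R) (v : Fin m → M) : M →ₗ[R] M →ₗ[R] R :=
  LinearMap.mk₂ R (fun x y => f (vecCons x (vecCons y v)))
    (fun _ _ _ => f.map_vecCons_add _ _ _) (fun _ _ _ => f.map_vecCons_smul _ _ _)
    (fun x _ _ => (f.curryLeft x).map_vecCons_add _ _ _)
    (fun _ x _ => (f.curryLeft x).map_vecCons_smul _ _ _)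

theorem bilinOfCons_isAlt (f : M [⋀^Fin (m + 2)]→ₗ[R] R) (v : Fin m → M) :
    (f.bilinOfCons v).IsAlt := fun _ =>
  f.map_eq_zero_of_eq _ (by simp) Fin.zero_ne_one

end AlternatingMap

namespace Matrix

variable {R ι : Type*} [CommRing R]

theorem sum_det_submatrix_cons_cons_eq_zero {κ : Type*} [Fintype κ] {m : ℕ}
    (M : Matrix (Fin (m + 2)) ι R) (c t : κ → ι) (s : Fin m → ι)
    (h : ∀ a b, ∑ i, M a (c i) * M b (t i) = ∑ i, M b (c i) * M a (t i)) :
    ∑ i, (M.submatrix id (vecCons (c i) (vecCons (t i) s))).det = 0 := by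
  have hdet : ∀ i, (M.submatrix id (vecCons (c i) (vecCons (t i) s))).det =
      detRowAlternating.bilinOfCons (Mᵀ ∘ s) (Mᵀ (c i)) (Mᵀ (t i)) := fun i => by
    rw [← det_transpose, transpose_submatrix]
    show detRowAlternating (fun j => Mᵀ _) = detRowAlternating _
    congr 1
    ext j : 1
    cases j using Fin.cases with
    | zero => rfl
    | succ j => cases j using Fin.cases <;> rfl
  simp only [hdet]
  exact (AlternatingMap.bilinOfCons_isAlt _ _).sum_apply_eq_zero _ _ h

theorem det_submatrix_eq_zero_of_not_injective {k : ℕ} (M : Matrix (Fin k) ι R)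
    {g : Fin k → ι} (hg : ¬Function.Injective g) : (M.submatrix id g).det = 0 := by
  obtain ⟨a, b, hab, hne⟩ := Function.not_injective_iff.mp hg
  exact det_zero_of_column_eq hne fun r => by simp [hab]

theorem det_submatrix_eq_sign_smul_pluckerCoord [LinearOrder ι] [DecidableEq ι] {k : ℕ}
    (M : Matrix (Fin k) ι R) {g : Fin k → ι} (hg : Function.Injective g) {T : Finset ι}
    (hgT : ∀ a, g a ∈ T) (hT : T.card = k) :
    ∃ σ : Equiv.Perm (Fin k), (M.submatrix id g).det = Equiv.Perm.sign σ • pluckerCoord M T := by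
  set e := T.orderIsoOfFin hT
  have he : Function.Injective fun a => e.symm ⟨g a, hgT a⟩ := fun a b hab =>
    hg (by simpa using congrArg Subtype.val (e.symm.injective hab))
  set σ := Equiv.ofBijective _ he.bijective_of_finite
  have hgσ : M.submatrix id g = (M.submatrix id fun a => (e a : ι)).submatrix id σ := by
    ext r a
    simp [σ]
  refine ⟨σ, ?_⟩
  rw [hgσ, det_permute', pluckerCoord, dif_pos hT, Units.smul_def, zsmul_eq_mul]

end Matrix

theorem exists_sum_units_smul_pluckerCoord_insert_insert_eq_zero {R ι κ : Type*} [CommRing R]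
    [LinearOrder ι] [DecidableEq ι] [Fintype κ] {m : ℕ} (M : Matrix (Fin (m + 2)) ι R)
    (c t : κ → ι) (hct : ∀ i, c i ≠ t i)
    (h : ∀ a b, ∑ i, M a (c i) * M b (t i) = ∑ i, M b (c i) * M a (t i))
    (S : Finset ι) (hS : S.card = m) :
    ∃ ε : {i // c i ∉ S ∧ t i ∉ S} → ℤˣ,
      ∑ i, ε i • pluckerCoord M (insert (c i) (insert (t i) S)) = 0 := by
  classical
  set s := S.orderEmbOfFin hS
  have hinj : ∀ i, Function.Injective (vecCons (c i) (vecCons (t i) s)) ↔ c i ∉ S ∧ t i ∉ S :=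
    fun i => by simp [vecCons, Fin.cons_injective_iff, Fin.range_cons, hct i, s.injective, s]
  have hmem : ∀ i a, vecCons (c i) (vecCons (t i) s) a ∈ insert (c i) (insert (t i) S) :=
    fun i a => by
      cases a using Fin.cases with
      | zero => simp
      | succ a => cases a using Fin.cases <;> simp [s, orderEmbOfFin_mem]
  have hsign : ∀ i : {i // c i ∉ S ∧ t i ∉ S}, ∃ σ : Equiv.Perm (Fin (m + 2)),
      (M.submatrix id (vecCons (c i) (vecCons (t i) s))).det =
        Equiv.Perm.sign σ • pluckerCoord M (insert (c i) (insert (t i) S)) := fun i =>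
    det_submatrix_eq_sign_smul_pluckerCoord M ((hinj i).mpr i.2) (hmem i)
      (by rw [card_insert_of_notMem (by simp [hct i, i.2.1]), card_insert_of_notMem i.2.2, hS])
  choose σ hσ using hsign
  refine ⟨fun i => Equiv.Perm.sign (σ i), ?_⟩
  calc ∑ i, Equiv.Perm.sign (σ i) • pluckerCoord M (insert (c i) (insert (t i) S))
      = ∑ i : {i // c i ∉ S ∧ t i ∉ S}, (M.submatrix id (vecCons (c i) (vecCons (t i) s))).det :=
        sum_congr rfl fun i _ => (hσ i).symm
    _ = ∑ i, (M.submatrix id (vecCons (c i) (vecCons (t i) s))).det := by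
        rw [← Fintype.sum_subtype_add_sum_subtype (fun i => c i ∉ S ∧ t i ∉ S), left_eq_add]
        exact Fintype.sum_eq_zero _ fun i =>
          det_submatrix_eq_zero_of_not_injective M (mt (hinj i).mp i.2)
    _ = 0 := sum_det_submatrix_cons_cons_eq_zero M c t s h

theorem tropical_symplectic_grassmannian_subset_dressian_general {K : Type*} [Field K]
    (v : K → WithTop ℝ)
    (hmul : ∀ x y : K, v (x * y) = v x + v y)
    (hadd : ∀ x y : K, min (v x) (v y) ≤ v (x + y))
    (hzero : v 0 = ⊤)
    {k n : ℕ} (M : Matrix (Fin k) (Fin (n + n)) K)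
    (hiso : ∀ x ∈ Submodule.span K (Set.range fun i : Fin k => M i),
      ∀ y ∈ Submodule.span K (Set.range fun i : Fin k => M i),
        (∑ i : Fin n,
          (x (Fin.castAdd n i) * y (Fin.natAdd n i) -
            x (Fin.natAdd n i) * y (Fin.castAdd n i))) = 0) :
    ∀ S : Finset (Fin (n + n)), S.card = k - 2 →
      AAT (fun i : {i : Fin n // Fin.castAdd n i ∉ S ∧ Fin.natAdd n i ∉ S} =>
        v (pluckerCoord M
          (insert (Fin.castAdd n (i : Fin n)) (insert (Fin.natAdd n (i : Fin n)) S)))) := by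
  intro S hS
  by_cases h1 : v 1 = ⊤
  · exact Or.inl fun i => map_eq_top_of_map_one_eq_top hmul h1 _
  have hct : ∀ i : Fin n, Fin.castAdd n i ≠ Fin.natAdd n i := fun i => by
    simpa [Fin.ext_iff] using i.pos.ne'
  rcases Nat.lt_or_ge k 2 with hk | hk
  · refine Or.inl fun i => ?_
    have hcard : 1 < (insert (Fin.castAdd n i.1) (insert (Fin.natAdd n i.1) S)).card :=
      one_lt_card.mpr ⟨_, mem_insert_self _ _, _, mem_insert_of_mem (mem_insert_self _ _), hct i⟩
    show v (pluckerCoord M _) = ⊤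
    rw [pluckerCoord, dif_neg (by omega), hzero]
  obtain ⟨m, rfl⟩ := Nat.exists_eq_add_of_le' hk
  have hsymm : ∀ a b, ∑ i, M a (Fin.castAdd n i) * M b (Fin.natAdd n i) =
      ∑ i, M b (Fin.castAdd n i) * M a (Fin.natAdd n i) := fun a b => by
    have h := hiso (M a) (Submodule.subset_span ⟨a, rfl⟩) (M b) (Submodule.subset_span ⟨b, rfl⟩)
    rw [sum_sub_distrib, sub_eq_zero] at h
    simpa only [mul_comm (M a _)] using h
  obtain ⟨ε, hε⟩ := exists_sum_units_smul_pluckerCoord_insert_insert_eq_zero M _ _ hct hsymm S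
    (by omega)
  let w := AddValuation.of v hzero (map_one_eq_zero_of_ne_top hmul h1) hadd hmul
  have h := w.aat_of_sum_eq_zero _ hε
  simp only [w.map_units_int_smul] at h
  exact h

/-- Membership in the tropical symplectic Grassmannian implies membership in the symplectic
Dressian: if `μ = val(X)` for the Plücker vector `X` of an isotropic `k`-dimensional subspace
`L ⊆ K^{2n}` (pairing `i ↔ ī = n + i`), then for every `(k−2)`-subset `S` of `[2n]`, the
minimum of `μ_{S∪{i,ī}}` over valid `i` is attained at least twice or is `∞`. -/
theorem tropical_symplectic_grassmannian_subset_dressian {K : Type*} [Field K]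
    (v : K → WithTop ℝ)
    (hmul : ∀ x y : K, v (x * y) = v x + v y)
    (hadd : ∀ x y : K, min (v x) (v y) ≤ v (x + y))
    (hzero : v 0 = ⊤)
    {k n : ℕ} (M : Matrix (Fin k) (Fin (n + n)) K)
    (hli : LinearIndependent K fun i : Fin k => M i)
    (hiso : ∀ x ∈ Submodule.span K (Set.range fun i : Fin k => M i),
      ∀ y ∈ Submodule.span K (Set.range fun i : Fin k => M i),
        (∑ i : Fin n,
          (x (Fin.castAdd n i) * y (Fin.natAdd n i) -
            x (Fin.natAdd n i) * y (Fin.castAdd n i))) = 0) :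
    ∀ S : Finset (Fin (n + n)), S.card = k - 2 →
      AAT (fun i : {i : Fin n // Fin.castAdd n i ∉ S ∧ Fin.natAdd n i ∉ S} =>
        v (pluckerCoord M
          (insert (Fin.castAdd n (i : Fin n)) (insert (Fin.natAdd n (i : Fin n)) S)))) :=
  tropical_symplectic_grassmannian_subset_dressian_general v hmul hadd hzero M hiso
end

section
/- Each row of a tropical matrix C ∈ T^{k×m} of tropical full rank lies in the tropical linear space of its valuated matroid of maximal minors: for every row r of C and every (k+1)-subset T of [m], the minimum of tdet(C_{T∖i}) + r_i over i ∈ T is attained at least twice or equals ∞, where tdet denotes the tropical determinant and C_J the submatrix with columns J. -/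
/-- The tropical determinant (min-plus permanent) of a square tropical matrix. -/
noncomputable def tropDet {k : ℕ} (N : Matrix (Fin k) (Fin k) (WithTop ℝ)) : WithTop ℝ :=
  Finset.univ.inf fun σ : Equiv.Perm (Fin k) => ∑ i, N i (σ i)

/-- The tropical maximal minor of `C` on the column set `J` (`∞` if `J.card ≠ k`). -/
noncomputable def tropMinor {k m : ℕ}
    (C : Matrix (Fin k) (Fin m) (WithTop ℝ)) (J : Finset (Fin m)) : WithTop ℝ :=
  if h : J.card = k then
    tropDet (C.submatrix id fun a : Fin k => ((J.orderIsoOfFin h) a : Fin m))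
  else ⊤

/-!
For `i ∈ T`, take an optimal assignment `e` of the rows of `C` to the columns `T ∖ i`. Moving
row `r` from its column `j := e r` to `i` gives an assignment onto `T ∖ j` of the same total
weight, so `tdet(C_{T∖j}) + r_j ≤ tdet(C_{T∖i}) + r_i` with `j ≠ i`; at a minimising `i` the
minimum is therefore attained again at `j`. This exchange is the swap of the two copies of `r`
in the Laplace expansion of the tropical determinant of `C_T` with the row `r` appended.
-/

open Finset

theorem Function.Injective.update_of_forall_ne {α β : Type*} [DecidableEq α] {e : α → β}
    (he : Function.Injective e) {r : α} {b : β} (hb : ∀ x, e x ≠ b) :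
    Function.Injective (Function.update e r b) := by
  intro x y hxy
  by_cases hx : x = r <;> by_cases hy : y = r
  · rw [hx, hy]
  · simp only [hx, Function.update_self, Function.update_of_ne hy] at hxy
    exact absurd hxy.symm (hb y)
  · simp only [hy, Function.update_self, Function.update_of_ne hx] at hxy
    exact absurd hxy (hb x)
  · rwa [Function.update_of_ne hx, Function.update_of_ne hy, he.eq_iff] at hxy

theorem AAT.of_forall_exists_ne_le {ι : Type*} [Finite ι] {f : ι → WithTop ℝ}
    (h : ∀ i, ∃ j, j ≠ i ∧ f j ≤ f i) : AAT f := by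
  cases isEmpty_or_nonempty ι
  · exact Or.inl isEmptyElim
  obtain ⟨i, hi⟩ := Finite.exists_min f
  obtain ⟨j, hji, hj⟩ := h i
  exact Or.inr ⟨i, j, hji.symm, le_antisymm (hi j) hj, hi⟩

section tropMinor

variable {k m : ℕ} (C : Matrix (Fin k) (Fin m) (WithTop ℝ)) {J : Finset (Fin m)}

theorem tropMinor_le_sum (hJ : J.card = k) {e : Fin k → Fin m} (he : Function.Injective e)
    (hmem : ∀ x, e x ∈ J) : tropMinor C J ≤ ∑ x, C x (e x) := by
  set o := J.orderIsoOfFin hJ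
  have hπ : Function.Injective fun x => o.symm ⟨e x, hmem x⟩ := fun x y hxy =>
    he (congrArg Subtype.val (o.symm.injective hxy))
  let π := Equiv.ofBijective _ (Finite.injective_iff_bijective.mp hπ)
  rw [tropMinor, dif_pos hJ]
  calc tropDet (C.submatrix id fun a => (o a : Fin m))
      ≤ ∑ x, C x (o (π x)) := Finset.inf_le (Finset.mem_univ π)
    _ = ∑ x, C x (e x) := by simp [π]

theorem exists_sum_eq_tropMinor (hJ : J.card = k) :
    ∃ e : Fin k → Fin m, Function.Injective e ∧ (∀ x, e x ∈ J) ∧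
      ∑ x, C x (e x) = tropMinor C J := by
  set o := J.orderIsoOfFin hJ
  obtain ⟨π, -, hπ⟩ := Finset.exists_mem_eq_inf univ univ_nonempty
    fun π : Equiv.Perm (Fin k) => ∑ x, C x (o (π x) : Fin m)
  refine ⟨fun x => o (π x), fun x y hxy => π.injective (o.injective (Subtype.ext hxy)),
    fun x => (o (π x)).2, ?_⟩
  rw [tropMinor, dif_pos hJ]
  exact hπ.symm

theorem exists_ne_tropMinor_erase_add_le {T : Finset (Fin m)} (hT : T.card = k + 1) (r : Fin k)
    {i : Fin m} (hi : i ∈ T) :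
    ∃ j ∈ T, j ≠ i ∧ tropMinor C (T.erase j) + C r j ≤ tropMinor C (T.erase i) + C r i := by
  have hcard : ∀ a ∈ T, (T.erase a).card = k := fun a ha => by
    rw [card_erase_of_mem ha, hT, Nat.add_sub_cancel]
  obtain ⟨e, he, hmem, hsum⟩ := exists_sum_eq_tropMinor C (hcard i hi)
  have hji : e r ≠ i := (mem_erase.mp (hmem r)).1
  have hjT : e r ∈ T := mem_of_mem_erase (hmem r)
  let e' := Function.update e r i
  have he'_ne : ∀ x, x ≠ r → e' x = e x := fun x hx => Function.update_of_ne hx _ _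
  have he' : Function.Injective e' :=
    he.update_of_forall_ne fun x => (mem_erase.mp (hmem x)).1
  have hmem' : ∀ x, e' x ∈ T.erase (e r) := by
    intro x
    by_cases hx : x = r
    · simpa [e', hx] using ⟨hji.symm, hi⟩
    · rw [he'_ne x hx]
      exact mem_erase.mpr ⟨he.ne hx, mem_of_mem_erase (hmem x)⟩
  have hrest : ∑ x ∈ univ.erase r, C x (e' x) = ∑ x ∈ univ.erase r, C x (e x) :=
    sum_congr rfl fun x hx => by rw [he'_ne x (ne_of_mem_erase hx)]
  refine ⟨e r, hjT, hji, ?_⟩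
  calc tropMinor C (T.erase (e r)) + C r (e r)
      ≤ (∑ x, C x (e' x)) + C r (e r) := by
        gcongr
        exact tropMinor_le_sum C (hcard _ hjT) he' hmem'
    _ = (∑ x, C x (e x)) + C r i := by
        rw [← add_sum_erase _ _ (mem_univ r), ← add_sum_erase _ _ (mem_univ r), hrest]
        simp only [e', Function.update_self]
        ac_rfl
    _ = tropMinor C (T.erase i) + C r i := by rw [hsum]

end tropMinor

theorem row_in_tropical_linear_space_general {k m : ℕ}
    (C : Matrix (Fin k) (Fin m) (WithTop ℝ)) :
    ∀ r : Fin k, ∀ T : Finset (Fin m), T.card = k + 1 →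
      AAT (fun i : {i : Fin m // i ∈ T} =>
        tropMinor C (T.erase (i : Fin m)) + C r (i : Fin m)) := by
  intro r T hT
  refine AAT.of_forall_exists_ne_le fun i => ?_
  obtain ⟨j, hjT, hji, hle⟩ := exists_ne_tropMinor_erase_add_le C hT r i.2
  exact ⟨⟨j, hjT⟩, fun h => hji (congrArg Subtype.val h), hle⟩

/-- Each row of a tropical matrix of tropical full rank lies in the tropical linear space of its
valuated matroid of maximal minors: for every row `r` and every `(k+1)`-subset `T` of the
columns, the minimum of `tdet(C_{T∖i}) + r_i` over `i ∈ T` is attained at least twice or `∞`. -/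
theorem row_in_tropical_linear_space {k m : ℕ}
    (C : Matrix (Fin k) (Fin m) (WithTop ℝ))
    (hfull : ∃ J : Finset (Fin m), tropMinor C J ≠ ⊤) :
    ∀ r : Fin k, ∀ T : Finset (Fin m), T.card = k + 1 →
      AAT (fun i : {i : Fin m // i ∈ T} =>
        tropMinor C (T.erase (i : Fin m)) + C r (i : Fin m)) :=
  row_in_tropical_linear_space_general C
end
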